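/- arXiv:0802.3401 — 2 statements merged into one kernel-verified Lean document; each statement's English description precedes it below -/
import Mathlib

section
/- For every positive integer M, ∑_{i=1}^{M} C(M,i) · i! · (i+1)/2 = (M/2) · ⌊e·M!⌋. -/
/-!
Write `D i = M! / (M - i)! = C(M, i) · i!` for the falling factorial. Since
`D i · (M - i) = D (i + 1)`, the weighted sum `∑ D i · (i + 1) = ∑ D i · (M + 1) - ∑ D i · (M - i)`
telescopes to `M · ∑ D i + 1`. Reversing the index, `∑_{i ≤ M} D i = ∑_{j ≤ M} M! / j!` is an
integer, and it is `⌊e · M!⌋` because the tail `∑_{j > M} M! / j!` of `e · M! = ∑_j M! / j!` lies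
strictly between `0` and `1` when `M ≥ 1`.
-/

open Finset Nat

theorem Nat.sum_range_descFactorial_mul_succ (n : ℕ) :
    ∑ i ∈ range (n + 1), n.descFactorial i * (i + 1) =
      n * ∑ i ∈ range (n + 1), n.descFactorial i + 1 := by
  have hshift : ∑ i ∈ range (n + 1), n.descFactorial i * (n - i) + 1 =
      ∑ i ∈ range (n + 1), n.descFactorial i := by
    simp_rw [mul_comm _ (n - _), ← descFactorial_succ]
    rw [sum_range_succ, descFactorial_of_lt n.lt_succ_self, sum_range_succ' _ n, descFactorial_zero]
  have hsplit : ∑ i ∈ range (n + 1), n.descFactorial i * (i + 1) +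
      ∑ i ∈ range (n + 1), n.descFactorial i * (n - i) =
        (n + 1) * ∑ i ∈ range (n + 1), n.descFactorial i := by
    rw [← sum_add_distrib, mul_sum]
    refine sum_congr rfl fun i hi => ?_
    have : i ≤ n := Nat.lt_succ_iff.mp (mem_range.mp hi)
    rw [← mul_add, mul_comm]
    congr 1
    omega
  linarith

theorem Nat.sum_range_descFactorial_eq_sum_factorial_div {K : Type*} [Field K] [CharZero K]
    (n : ℕ) :
    ∑ i ∈ range (n + 1), (n.descFactorial i : K) = ∑ j ∈ range (n + 1), (n ! : K) / j ! := by
  rw [← sum_range_reflect]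
  refine sum_congr rfl fun j hj => ?_
  have hj : j ≤ n := Nat.lt_succ_iff.mp (mem_range.mp hj)
  have h := factorial_mul_descFactorial (n.sub_le j)
  rw [Nat.sub_sub_self hj] at h
  rw [eq_div_iff (cast_ne_zero.mpr (factorial_ne_zero _)), add_tsub_cancel_right, mul_comm]
  exact_mod_cast h

theorem Real.floor_exp_one_mul_factorial {n : ℕ} (hn : 0 < n) :
    ⌊exp 1 * n !⌋ = ∑ i ∈ range (n + 1), n.descFactorial i := by
  have hsum : ∑ j ∈ range (n + 1), (n ! : ℝ) / j ! =
      n ! * ∑ j ∈ range (n + 1), (1 : ℝ) ^ j / j ! := by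
    simp [mul_sum, div_eq_mul_inv]
  rw [Int.floor_eq_iff]
  push_cast
  rw [Nat.sum_range_descFactorial_eq_sum_factorial_div, hsum, mul_comm (exp 1)]
  have hfac : (0 : ℝ) < n ! := by positivity
  constructor
  · exact mul_le_mul_of_nonneg_left (sum_le_exp_of_nonneg zero_le_one _) hfac.le
  · have hexp := mul_le_mul_of_nonneg_left (exp_bound' zero_le_one le_rfl n.succ_pos) hfac.le
    have htail :
        (n ! : ℝ) * ((1 : ℝ) ^ (n + 1) * ((n + 1 : ℕ) + 1) / ((n + 1)! * (n + 1 : ℕ))) < 1 := by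
      rw [factorial_succ]
      push_cast
      have : (1 : ℝ) ≤ n := by exact_mod_cast hn
      rw [one_pow, one_mul, mul_div_assoc', div_lt_one (by positivity)]
      nlinarith [mul_pos hfac (show (0 : ℝ) < n * n + n - 1 by nlinarith)]
    rw [mul_add] at hexp
    linarith

/-- For every positive integer `M`,
`∑_{i=1}^{M} C(M,i)·i!·(i+1)/2 = (M/2)·⌊e·M!⌋`. -/
theorem stmt5 (M : ℕ) (hM : 0 < M) :
    ∑ i ∈ Finset.Icc 1 M, (M.choose i : ℝ) * i.factorial * (i + 1) / 2 =
      (M : ℝ) / 2 * ((⌊Real.exp 1 * (M.factorial : ℝ)⌋ : ℤ) : ℝ) := by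
  have hterm (i : ℕ) :
      (M.choose i : ℝ) * i ! * (i + 1) / 2 = ((M.descFactorial i * (i + 1) : ℕ) : ℝ) / 2 := by
    rw [descFactorial_eq_factorial_mul_choose]
    push_cast
    ring
  have hsum := M.sum_range_descFactorial_mul_succ
  rw [sum_range_eq_add_Ico _ M.succ_pos, Nat.succ_eq_add_one, Ico_add_one_right_eq_Icc,
    descFactorial_zero] at hsum
  have hIcc : ∑ i ∈ Icc 1 M, M.descFactorial i * (i + 1) =
      M * ∑ i ∈ range (M + 1), M.descFactorial i := by
    omega
  rw [sum_congr rfl fun i _ => hterm i, ← sum_div, ← Nat.cast_sum, hIcc,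
    Real.floor_exp_one_mul_factorial hM]
  push_cast
  ring
end

section
/- Let X_1,...,X_M, Y be finite random variables with X_1,...,X_M mutually independent, and suppose I(X_S; Y) > 0 for every nonempty S ⊆ [M]. Then for every subset A ⊆ [M] disjoint from a nonempty set S and every T with S ⊊ T ⊆ [M] and A ∩ T = ∅, I(X_S; Y | X_A) < I(X_T; Y | X_A). -/
/-!
By the chain rule, `I(X_T; Y | X_A) = I(X_S; Y | X_A) + I(X_{T∖S}; Y | X_{S∪A})`. For disjoint
`B, C` with `X_B, X_C` independent, `I(X_B; Y | X_C) - I(X_B; Y) = I(X_B; X_C | Y) ≥ 0`, so the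
second term is at least `I(X_{T∖S}; Y) > 0`. Nonnegativity of `I(X_B; X_C | Y)` is Gibbs'
inequality through `log t ≥ 1 - 1/t`; since all marginals are evaluated at full input vectors,
the normalisation `∑ p(x_B, y) p(x_C, y) / p(y) ≤ 1` is obtained by counting the inputs that
share a given restriction to a set of coordinates.
-/

open Finset

/-- Marginal joint pmf of `(X_S, Y)` obtained from the joint pmf `p` of
`(X_1,…,X_M, Y)` by summing out inputs outside `S`; evaluated at the
values that `x` takes on `S` and at `y`. -/
noncomputable def margXY {M : ℕ} {α : Fin M → Type*} [∀ i, Fintype (α i)]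
    [∀ i, DecidableEq (α i)] {β : Type*} [Fintype β]
    (p : (∀ i, α i) → β → ℝ) (S : Finset (Fin M)) (x : ∀ i, α i) (y : β) : ℝ :=
  ∑ x' : ∀ i, α i, if ∀ i ∈ S, x' i = x i then p x' y else 0

/-- Marginal pmf of `X_S`. -/
noncomputable def margX {M : ℕ} {α : Fin M → Type*} [∀ i, Fintype (α i)]
    [∀ i, DecidableEq (α i)] {β : Type*} [Fintype β]
    (p : (∀ i, α i) → β → ℝ) (S : Finset (Fin M)) (x : ∀ i, α i) : ℝ :=
  ∑ y : β, margXY p S x y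

/-- Conditional mutual information `I(X_S; Y | X_A)`, via the standard
sum formula. -/
noncomputable def condMI {M : ℕ} {α : Fin M → Type*} [∀ i, Fintype (α i)]
    [∀ i, DecidableEq (α i)] {β : Type*} [Fintype β]
    (p : (∀ i, α i) → β → ℝ) (S A : Finset (Fin M)) : ℝ :=
  ∑ x : ∀ i, α i, ∑ y : β,
    p x y * Real.log ((margXY p (S ∪ A) x y * margX p A x) /
      (margX p (S ∪ A) x * margXY p A x y))

/-- `p` is a probability mass function. -/
def IsProb {M : ℕ} {α : Fin M → Type*} [∀ i, Fintype (α i)]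
    [∀ i, DecidableEq (α i)] {β : Type*} [Fintype β]
    (p : (∀ i, α i) → β → ℝ) : Prop :=
  (∀ x y, 0 ≤ p x y) ∧ ∑ x : ∀ i, α i, ∑ y : β, p x y = 1

/-- The inputs `X_1, …, X_M` are mutually independent. -/
def IndepInputs {M : ℕ} {α : Fin M → Type*} [∀ i, Fintype (α i)]
    [∀ i, DecidableEq (α i)] {β : Type*} [Fintype β]
    (p : (∀ i, α i) → β → ℝ) : Prop :=
  ∀ x : ∀ i, α i, margX p Finset.univ x = ∏ i : Fin M, margX p {i} x

/-- Membership in the fundamental region `R`. -/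
def memR {M : ℕ} {α : Fin M → Type*} [∀ i, Fintype (α i)]
    [∀ i, DecidableEq (α i)] {β : Type*} [Fintype β]
    (p : (∀ i, α i) → β → ℝ) (r : Fin M → ℝ) : Prop :=
  (∀ i, 0 ≤ r i) ∧ ∀ S : Finset (Fin M), ∑ i ∈ S, r i ≤ condMI p S Sᶜ

/-- Membership in the front facet `F_S`. -/
def memF {M : ℕ} {α : Fin M → Type*} [∀ i, Fintype (α i)]
    [∀ i, DecidableEq (α i)] {β : Type*} [Fintype β]
    (p : (∀ i, α i) → β → ℝ) (S : Finset (Fin M)) (r : Fin M → ℝ) : Prop :=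
  memR p r ∧ ∑ i ∈ S, r i = condMI p S Sᶜ

/-- Membership in the back face `B_A`. -/
def memB {M : ℕ} {α : Fin M → Type*} [∀ i, Fintype (α i)]
    [∀ i, DecidableEq (α i)] {β : Type*} [Fintype β]
    (p : (∀ i, α i) → β → ℝ) (A : Finset (Fin M)) (r : Fin M → ℝ) : Prop :=
  memR p r ∧ ∀ i ∈ A, r i = 0

section Marginals

variable {M : ℕ} {α : Fin M → Type*} [∀ i, Fintype (α i)] [∀ i, DecidableEq (α i)]
  {β : Type*} [Fintype β] {p : (∀ i, α i) → β → ℝ}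

theorem filter_forall_eq_eq_piFinset (U : Finset (Fin M)) (z : ∀ i, α i) :
    univ.filter (fun x : ∀ i, α i => ∀ i ∈ U, x i = z i) =
      Fintype.piFinset fun i => if i ∈ U then {z i} else univ := by
  ext x
  simp only [mem_filter, mem_univ, true_and, Fintype.mem_piFinset]
  refine forall_congr' fun i => ?_
  split_ifs <;> simp_all

theorem card_filter_forall_eq (U : Finset (Fin M)) (z : ∀ i, α i) :
    #(univ.filter fun x : ∀ i, α i => ∀ i ∈ U, x i = z i) = ∏ i ∈ Uᶜ, Fintype.card (α i) := by
  rw [filter_forall_eq_eq_piFinset, Fintype.card_piFinset, ← prod_mul_prod_compl U,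
    prod_eq_one fun i hi => by rw [if_pos hi, card_singleton], one_mul]
  exact prod_congr rfl fun i hi => by rw [if_neg (mem_compl.mp hi), card_univ]

theorem margXY_eq_sum_filter (U : Finset (Fin M)) (x : ∀ i, α i) (y : β) :
    margXY p U x y = ∑ x' ∈ univ.filter (fun x' : ∀ i, α i => ∀ i ∈ U, x' i = x i), p x' y :=
  (sum_filter _ _).symm

theorem margXY_congr {U : Finset (Fin M)} {x x' : ∀ i, α i} (h : ∀ i ∈ U, x' i = x i)
    (y : β) : margXY p U x' y = margXY p U x y := by
  simp only [margXY_eq_sum_filter]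
  exact sum_congr (filter_congr fun z _ => forall₂_congr fun i hi => by rw [h i hi]) fun _ _ => rfl

theorem margX_congr {U : Finset (Fin M)} {x x' : ∀ i, α i} (h : ∀ i ∈ U, x' i = x i) :
    margX p U x' = margX p U x :=
  sum_congr rfl fun y _ => margXY_congr h y

theorem margXY_empty (x : ∀ i, α i) (y : β) : margXY p ∅ x y = ∑ x', p x' y := by
  simp [margXY]

theorem margX_empty (hp : IsProb p) (x : ∀ i, α i) : margX p ∅ x = 1 := by
  rw [margX, ← hp.2, sum_comm]
  simp only [margXY_empty]

theorem margX_univ (x : ∀ i, α i) : margX p univ x = ∑ y, p x y := by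
  simp [margX, margXY, ← funext_iff]

theorem le_margXY (hp : ∀ x y, 0 ≤ p x y) (U : Finset (Fin M)) (x : ∀ i, α i) (y : β) :
    p x y ≤ margXY p U x y := by
  rw [margXY_eq_sum_filter]
  exact single_le_sum (fun x' _ => hp x' y) (by simp)

theorem margXY_nonneg (hp : ∀ x y, 0 ≤ p x y) (U : Finset (Fin M)) (x : ∀ i, α i) (y : β) :
    0 ≤ margXY p U x y :=
  (hp x y).trans (le_margXY hp U x y)

theorem margXY_le_margX (hp : ∀ x y, 0 ≤ p x y) (U : Finset (Fin M)) (x : ∀ i, α i) (y : β) :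
    margXY p U x y ≤ margX p U x :=
  single_le_sum (fun y' _ => margXY_nonneg hp U x y') (mem_univ y)

theorem margXY_pos (hp : ∀ x y, 0 ≤ p x y) {x : ∀ i, α i} {y : β} (hxy : 0 < p x y)
    (U : Finset (Fin M)) :
    0 < margXY p U x y :=
  hxy.trans_le (le_margXY hp U x y)

theorem margX_pos (hp : ∀ x y, 0 ≤ p x y) {x : ∀ i, α i} {y : β} (hxy : 0 < p x y)
    (U : Finset (Fin M)) :
    0 < margX p U x :=
  (margXY_pos hp hxy U).trans_le (margXY_le_margX hp U x y)

theorem sum_margXY_mul (U : Finset (Fin M)) (y : β) {f : (∀ i, α i) → ℝ}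
    (hf : ∀ x x', (∀ i ∈ U, x' i = x i) → f x' = f x) :
    ∑ x, margXY p U x y * f x = (∏ i ∈ Uᶜ, (Fintype.card (α i) : ℝ)) * ∑ x, p x y * f x := by
  simp only [margXY, sum_mul, ite_mul, zero_mul, mul_sum]
  rw [sum_comm]
  refine sum_congr rfl fun x' _ => ?_
  rw [← sum_filter, sum_congr rfl fun x hx => by
      rw [hf x' x fun i hi => ((mem_filter.mp hx).2 i hi).symm],
    sum_const, nsmul_eq_mul, filter_congr fun x _ => forall₂_congr fun i _ => eq_comm,
    card_filter_forall_eq, Nat.cast_prod]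

theorem sum_margXY_mul_margXY {B C : Finset (Fin M)} (hBC : Disjoint B C) (y : β) :
    ∑ x, margXY p B x y * margXY p C x y =
      (∏ i ∈ (B ∪ C)ᶜ, (Fintype.card (α i) : ℝ)) * (∑ x, p x y) ^ 2 := by
  have agree (x₁ x₂ x : ∀ i, α i) : ((∀ i ∈ B, x₁ i = x i) ∧ ∀ i ∈ C, x₂ i = x i) ↔
      ∀ i ∈ B ∪ C, x i = B.piecewise x₁ x₂ i := by
    refine ⟨fun ⟨h₁, h₂⟩ i hi => ?_, fun h => ⟨fun i hi => ?_, fun i hi => ?_⟩⟩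
    · rcases mem_union.mp hi with hB | hC
      · rw [piecewise_eq_of_mem _ _ _ hB, h₁ i hB]
      · rw [piecewise_eq_of_notMem _ _ _ (disjoint_right.mp hBC hC), h₂ i hC]
    · rw [h i (mem_union_left C hi), piecewise_eq_of_mem _ _ _ hi]
    · rw [h i (mem_union_right B hi), piecewise_eq_of_notMem _ _ _ (disjoint_right.mp hBC hi)]
  simp only [margXY, sum_mul_sum, ite_zero_mul_ite_zero]
  rw [sq, sum_mul_sum, mul_sum, sum_comm]
  refine sum_congr rfl fun x₁ _ => ?_
  rw [sum_comm, mul_sum]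
  refine sum_congr rfl fun x₂ _ => ?_
  rw [← sum_filter, sum_const, nsmul_eq_mul, filter_congr fun x _ => agree x₁ x₂ x,
    card_filter_forall_eq, Nat.cast_prod]

theorem sum_margX_singleton_update (hp : IsProb p) (i : Fin M) (x : ∀ i, α i) :
    ∑ a : α i, margX p {i} (Function.update x i a) = 1 := by
  simp only [margX, margXY, mem_singleton, forall_eq, Function.update_self]
  refine Eq.trans ?_ hp.2
  rw [sum_comm, sum_comm (s := univ (α := ∀ i, α i))]
  refine sum_congr rfl fun y _ => ?_
  rw [sum_comm]
  exact sum_congr rfl fun x' _ => by simp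

theorem margX_eq_prod (hp : IsProb p) (hind : IndepInputs p) (U : Finset (Fin M))
    (x : ∀ i, α i) : margX p U x = ∏ i ∈ U, margX p {i} x := by
  have hfac (x' : ∀ i, α i) :
      margX p univ x' = ∏ i, margX p {i} (Function.update x i (x' i)) := by
    rw [hind]
    exact prod_congr rfl fun i _ => margX_congr (by simp)
  calc margX p U x
      = ∑ x' ∈ univ.filter (fun x' : ∀ i, α i => ∀ i ∈ U, x' i = x i), margX p univ x' := by
        rw [margX]
        simp only [margXY_eq_sum_filter, margX_univ]
        rw [sum_comm]
    _ = ∏ i, ∑ a ∈ (if i ∈ U then {x i} else univ), margX p {i} (Function.update x i a) := by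
        rw [filter_forall_eq_eq_piFinset, prod_univ_sum]
        exact sum_congr rfl fun x' _ => hfac x'
    _ = ∏ i ∈ U, margX p {i} x := by
        rw [← prod_mul_prod_compl U, prod_eq_one (s := Uᶜ) fun i hi => by
          rw [if_neg (mem_compl.mp hi), sum_margX_singleton_update hp], mul_one]
        exact prod_congr rfl fun i hi => by rw [if_pos hi, sum_singleton, Function.update_eq_self]

theorem margX_union (hp : IsProb p) (hind : IndepInputs p) {B C : Finset (Fin M)}
    (hBC : Disjoint B C) (x : ∀ i, α i) : margX p (B ∪ C) x = margX p B x * margX p C x := by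
  rw [margX_eq_prod hp hind (B ∪ C), margX_eq_prod hp hind B, margX_eq_prod hp hind C,
    prod_union hBC]

end Marginals

theorem Real.log_mul_div_mul {a b c d : ℝ} (ha : 0 < a) (hb : 0 < b) (hc : 0 < c) (hd : 0 < d) :
    Real.log (a * b / (c * d)) = Real.log a + Real.log b - Real.log c - Real.log d := by
  rw [Real.log_div (by positivity) (by positivity), Real.log_mul ha.ne' hb.ne',
    Real.log_mul hc.ne' hd.ne']
  ring

theorem mul_one_sub_div_le_mul_log_div {w a b : ℝ} (hw : 0 ≤ w) (ha : 0 < a) (hb : 0 < b) :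
    w * (1 - b / a) ≤ w * Real.log (a / b) := by
  gcongr
  simpa only [inv_div] using Real.one_sub_inv_le_log_of_pos (div_pos ha hb)

section MutualInformation

variable {M : ℕ} {α : Fin M → Type*} [∀ i, Fintype (α i)] [∀ i, DecidableEq (α i)]
  {β : Type*} [Fintype β] {p : (∀ i, α i) → β → ℝ}

theorem condMI_eq_add_condMI_sdiff (hp : ∀ x y, 0 ≤ p x y) {S T : Finset (Fin M)} (hST : S ⊆ T)
    (A : Finset (Fin M)) : condMI p T A = condMI p S A + condMI p (T \ S) (S ∪ A) := by
  have hU : T \ S ∪ (S ∪ A) = T ∪ A := by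
    rw [← union_assoc, sdiff_union_self_eq_union, union_eq_left.mpr hST]
  simp only [condMI, hU, ← sum_add_distrib, ← mul_add]
  refine sum_congr rfl fun x _ => sum_congr rfl fun y _ => ?_
  rcases (hp x y).eq_or_lt with hxy | hxy
  · simp [← hxy]
  have hXY := margXY_pos hp hxy
  have hX := margX_pos hp hxy
  rw [Real.log_mul_div_mul (hXY _) (hX _) (hX _) (hXY _),
    Real.log_mul_div_mul (hXY _) (hX _) (hX _) (hXY _),
    Real.log_mul_div_mul (hXY _) (hX _) (hX _) (hXY _)]
  ring

/-- `I(X_B; X_C | Y)`. -/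
noncomputable def condMIGivenOutput (p : (∀ i, α i) → β → ℝ) (B C : Finset (Fin M)) : ℝ :=
  ∑ x, ∑ y, p x y *
    Real.log (margXY p (B ∪ C) x y * margXY p ∅ x y / (margXY p B x y * margXY p C x y))

theorem condMI_sub_condMI_empty (hp : IsProb p) (hind : IndepInputs p) {B C : Finset (Fin M)}
    (hBC : Disjoint B C) : condMI p B C - condMI p B ∅ = condMIGivenOutput p B C := by
  simp only [condMI, condMIGivenOutput, union_empty, ← sum_sub_distrib, ← mul_sub]
  refine sum_congr rfl fun x _ => sum_congr rfl fun y _ => ?_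
  rcases hp.1 x y |>.eq_or_lt with hxy | hxy
  · simp [← hxy]
  have hXY := margXY_pos hp.1 hxy
  have hX := margX_pos hp.1 hxy
  rw [Real.log_mul_div_mul (hXY _) (hX _) (hX _) (hXY _),
    Real.log_mul_div_mul (hXY _) (hX _) (hX _) (hXY _),
    Real.log_mul_div_mul (hXY _) (hXY _) (hXY _) (hXY _),
    margX_union hp hind hBC, margX_empty hp, Real.log_mul (hX _).ne' (hX _).ne', Real.log_one]
  ring

theorem sum_mul_margXY_mul_margXY_div_le (hp : ∀ x y, 0 ≤ p x y) {B C : Finset (Fin M)}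
    (hBC : Disjoint B C) (y : β) :
    ∑ x, p x y * (margXY p B x y * margXY p C x y / (margXY p (B ∪ C) x y * margXY p ∅ x y)) ≤
      ∑ x, p x y := by
  rcases isEmpty_or_nonempty (∀ i, α i) with _ | hne
  · simp
  obtain ⟨z⟩ := hne
  simp only [margXY_empty]
  set q := ∑ x, p x y
  have hq : 0 ≤ q := sum_nonneg fun x _ => hp x y
  set N := ∏ i ∈ (B ∪ C)ᶜ, (Fintype.card (α i) : ℝ)
  have hN : 0 < N := prod_pos fun i _ => Nat.cast_pos.mpr (Fintype.card_pos_iff.mpr ⟨z i⟩)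
  refine le_of_mul_le_mul_left ?_ hN
  rw [← sum_margXY_mul (B ∪ C) y fun x x' h => by
    rw [margXY_congr fun i hi => h i (mem_union_left C hi),
      margXY_congr fun i hi => h i (mem_union_right B hi), margXY_congr h]]
  calc ∑ x, margXY p (B ∪ C) x y * (margXY p B x y * margXY p C x y / (margXY p (B ∪ C) x y * q))
      ≤ ∑ x, margXY p B x y * margXY p C x y / q := by
        refine sum_le_sum fun x _ => ?_
        rcases (margXY_nonneg hp (B ∪ C) x y).eq_or_lt with ha | ha
        · rw [← ha, zero_mul]
          exact div_nonneg (mul_nonneg (margXY_nonneg hp B x y) (margXY_nonneg hp C x y)) hq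
        · rw [mul_div_assoc', mul_div_mul_left _ _ ha.ne']
    _ = N * q ^ 2 / q := by rw [← sum_div, sum_margXY_mul_margXY hBC]
    _ ≤ N * q := div_le_of_le_mul₀ hq (by positivity) (le_of_eq (by ring))

theorem condMIGivenOutput_nonneg (hp : IsProb p) {B C : Finset (Fin M)} (hBC : Disjoint B C) :
    0 ≤ condMIGivenOutput p B C := by
  have hratio : ∑ x, ∑ y, p x y * (margXY p B x y * margXY p C x y /
      (margXY p (B ∪ C) x y * margXY p ∅ x y)) ≤ 1 := by
    refine (sum_comm.trans_le (sum_le_sum fun y _ => ?_)).trans_eq (sum_comm.trans hp.2)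
    exact sum_mul_margXY_mul_margXY_div_le hp.1 hBC y
  calc 0 ≤ 1 - ∑ x, ∑ y, p x y * (margXY p B x y * margXY p C x y /
        (margXY p (B ∪ C) x y * margXY p ∅ x y)) := sub_nonneg.mpr hratio
    _ = ∑ x, ∑ y, p x y * (1 - margXY p B x y * margXY p C x y /
        (margXY p (B ∪ C) x y * margXY p ∅ x y)) := by
      simp only [mul_sub, mul_one, sum_sub_distrib, hp.2]
    _ ≤ condMIGivenOutput p B C := by
      refine sum_le_sum fun x _ => sum_le_sum fun y _ => ?_
      rcases hp.1 x y |>.eq_or_lt with hxy | hxy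
      · simp [← hxy]
      have hXY := margXY_pos hp.1 hxy
      exact mul_one_sub_div_le_mul_log_div hxy.le (mul_pos (hXY _) (hXY _))
        (mul_pos (hXY _) (hXY _))

theorem condMI_empty_le_condMI (hp : IsProb p) (hind : IndepInputs p) {B C : Finset (Fin M)}
    (hBC : Disjoint B C) : condMI p B ∅ ≤ condMI p B C :=
  sub_nonneg.mp (condMI_sub_condMI_empty hp hind hBC ▸ condMIGivenOutput_nonneg hp hBC)

end MutualInformation

theorem stmt8_general {M : ℕ} {α : Fin M → Type*} [∀ i, Fintype (α i)]
    [∀ i, DecidableEq (α i)] {β : Type*} [Fintype β]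
    (p : (∀ i, α i) → β → ℝ) (hp : IsProb p) (hind : IndepInputs p)
    (hpos : ∀ S : Finset (Fin M), S.Nonempty → 0 < condMI p S ∅)
    (S T A : Finset (Fin M)) (hST : S ⊂ T) (hAT : Disjoint A T) :
    condMI p S A < condMI p T A := by
  have hTS : (T \ S).Nonempty := sdiff_nonempty.mpr (not_subset_of_ssubset hST)
  have hdisj : Disjoint (T \ S) (S ∪ A) :=
    disjoint_union_right.mpr ⟨sdiff_disjoint, (hAT.mono_right sdiff_subset).symm⟩
  rw [condMI_eq_add_condMI_sdiff hp.1 hST.subset A]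
  linarith [hpos _ hTS, condMI_empty_le_condMI hp hind hdisj]

/-- Under non-degeneracy condition (1), strict monotonicity in the first
argument: `I(X_S; Y | X_A) < I(X_T; Y | X_A)` for `S ⊊ T`, `A ∩ T = ∅`. -/
theorem stmt8 {M : ℕ} {α : Fin M → Type*} [∀ i, Fintype (α i)]
    [∀ i, DecidableEq (α i)] {β : Type*} [Fintype β]
    (p : (∀ i, α i) → β → ℝ) (hp : IsProb p) (hind : IndepInputs p)
    (hpos : ∀ S : Finset (Fin M), S.Nonempty → 0 < condMI p S ∅)
    (S T A : Finset (Fin M)) (hS : S.Nonempty) (hST : S ⊂ T)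
    (hAS : Disjoint A S) (hAT : Disjoint A T) :
    condMI p S A < condMI p T A :=
  stmt8_general p hp hind hpos S T A hST hAT
end
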